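/- Let T (ground-truth category) and C (cluster assignment) be discrete random variables on a finite probability space. Define the clustering error C_e := 1 − Σ_k max_t P(T = t, C = k). Then C_e ≤ 1 − exp(−H(T | C)). -/

import Mathlib

open Finset Real
open scoped Classical

noncomputable section

/-- Probability of an event on a finite space with pmf `p`. -/
def pr {Ω : Type*} [Fintype Ω] (p : Ω → ℝ) (E : Ω → Prop) : ℝ :=
  ∑ ω, if E ω then p ω else 0

/-- Conditional probability `P(A | B)`. -/
def cpr {Ω : Type*} [Fintype Ω] (p : Ω → ℝ) (A B : Ω → Prop) : ℝ :=
  pr p (fun ω => A ω ∧ B ω) / pr p B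

/-- Shannon entropy (nats) of a random variable `T`. -/
def entH {Ω α : Type*} [Fintype Ω] [Fintype α] (p : Ω → ℝ) (T : Ω → α) : ℝ :=
  -∑ t, pr p (fun ω => T ω = t) * Real.log (pr p (fun ω => T ω = t))

/-- Entropy of the conditional distribution of `T` given `Z = z`. -/
def condEntAt {Ω α β : Type*} [Fintype Ω] [Fintype α] (p : Ω → ℝ) (T : Ω → α)
    (Z : Ω → β) (z : β) : ℝ :=
  -∑ t, cpr p (fun ω => T ω = t) (fun ω => Z ω = z) *
      Real.log (cpr p (fun ω => T ω = t) (fun ω => Z ω = z))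

/-- Conditional Shannon entropy `H(T | Z)`. -/
def condEntH {Ω α β : Type*} [Fintype Ω] [Fintype α] [Fintype β] (p : Ω → ℝ) (T : Ω → α)
    (Z : Ω → β) : ℝ :=
  ∑ z, pr p (fun ω => Z ω = z) * condEntAt p T Z z

/-- Mutual information `I(T; V)` (nats), with the convention `0 log 0 = 0`. -/
def mi {Ω α β : Type*} [Fintype Ω] [Fintype α] [Fintype β] (p : Ω → ℝ) (T : Ω → α)
    (V : Ω → β) : ℝ :=
  ∑ t, ∑ v,
    pr p (fun ω => T ω = t ∧ V ω = v) *
      Real.log (pr p (fun ω => T ω = t ∧ V ω = v) /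
        (pr p (fun ω => T ω = t) * pr p (fun ω => V ω = v)))

/-- Conditional mutual information `I(C; X | V) = H(C|V) - H(C | (X,V))`. -/
def cmi {Ω α β γ : Type*} [Fintype Ω] [Fintype α] [Fintype β] [Fintype γ]
    (p : Ω → ℝ) (C : Ω → α) (X : Ω → β) (V : Ω → γ) : ℝ :=
  condEntH p C V - condEntH p C (fun ω => (X ω, V ω))

/-!
On a cluster `k` of mass `w`, the conditional law `q` of `T` satisfies
`exp (-H(T | C = k)) = exp (∑ q log q) ≤ max q`, because the `q`-average of `log q` is at most
`log (max q)`; multiplying by `w` gives `w · exp (-H(T | C = k)) ≤ max_t P(T = t, C = k)`.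
Convexity of `exp` (Jensen over the clusters) turns `exp (-H(T | C))` into at most the `w`-average
of `exp (-H(T | C = k))`, and summing the per-cluster bounds finishes.
-/

section FiniteProbability

variable {Ω : Type*} [Fintype Ω]

lemma pr_nonneg {p : Ω → ℝ} (hp : ∀ ω, 0 ≤ p ω) (E : Ω → Prop) : 0 ≤ pr p E :=
  sum_nonneg fun ω _ => by split <;> simp [hp ω]

lemma sum_pr_eq_sum {β : Type*} [Fintype β] (p : Ω → ℝ) (f : Ω → β) :
    ∑ b, pr p (fun ω => f ω = b) = ∑ ω, p ω := by
  unfold pr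
  rw [sum_comm]
  simp

lemma sum_pr_eq_and {α : Type*} [Fintype α] (p : Ω → ℝ) (T : Ω → α) (B : Ω → Prop) :
    ∑ t, pr p (fun ω => T ω = t ∧ B ω) = pr p B := by
  unfold pr
  rw [sum_comm]
  refine sum_congr rfl fun ω _ => ?_
  by_cases h : B ω <;> simp [h]

end FiniteProbability

lemma exp_sum_mul_log_le_sup' {α : Type*} [Fintype α] [Nonempty α] {q : α → ℝ}
    (hq : ∀ t, 0 ≤ q t) (hq1 : ∑ t, q t = 1) :
    exp (∑ t, q t * log (q t)) ≤ univ.sup' univ_nonempty q := by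
  set M := univ.sup' univ_nonempty q
  have hqM : ∀ t, q t ≤ M := fun t => le_sup' q (mem_univ t)
  have hM : 0 < M := by
    by_contra! hM
    have : ∑ t, q t ≤ 0 := sum_nonpos fun t _ => (hqM t).trans hM
    linarith
  have hle : ∑ t, q t * log (q t) ≤ log M :=
    calc ∑ t, q t * log (q t) ≤ ∑ t, q t * log M := by
          refine sum_le_sum fun t _ => ?_
          rcases (hq t).eq_or_lt with h | h
          · simp [← h]
          · exact mul_le_mul_of_nonneg_left (log_le_log h (hqM t)) (hq t)
      _ = log M := by rw [← sum_mul, hq1, one_mul]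
  calc exp (∑ t, q t * log (q t)) ≤ exp (log M) := exp_le_exp.2 hle
    _ = M := exp_log hM

section ConditionalEntropy

variable {Ω 𝒯 𝒦 : Type*} [Fintype Ω] [Fintype 𝒯] {p : Ω → ℝ}

lemma exp_neg_condEntH_le [Fintype 𝒦] (hp : ∀ ω, 0 ≤ p ω) (hsum : ∑ ω, p ω = 1)
    (T : Ω → 𝒯) (C : Ω → 𝒦) :
    exp (-condEntH p T C) ≤
      ∑ k, pr p (fun ω => C ω = k) * exp (-condEntAt p T C k) := by
  have hw1 : ∑ k, pr p (fun ω => C ω = k) = 1 := by rw [sum_pr_eq_sum, hsum]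
  have hjensen := convexOn_exp.map_sum_le (t := univ) (w := fun k => pr p (fun ω => C ω = k))
    (p := fun k => -condEntAt p T C k) (fun k _ => pr_nonneg hp _) hw1
    (fun k _ => Set.mem_univ _)
  simpa [condEntH, smul_eq_mul, ← sum_neg_distrib] using hjensen

lemma pr_mul_exp_neg_condEntAt_le_sup' [Nonempty 𝒯] (hp : ∀ ω, 0 ≤ p ω)
    (T : Ω → 𝒯) (C : Ω → 𝒦) (k : 𝒦) :
    pr p (fun ω => C ω = k) * exp (-condEntAt p T C k) ≤
      univ.sup' univ_nonempty (fun t => pr p (fun ω => T ω = t ∧ C ω = k)) := by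
  set w := pr p (fun ω => C ω = k)
  set joint := fun t => pr p (fun ω => T ω = t ∧ C ω = k)
  obtain ⟨t₀⟩ := ‹Nonempty 𝒯›
  rcases (pr_nonneg hp _ : 0 ≤ w).eq_or_lt with hw | hw
  · rw [show w = 0 from hw.symm, zero_mul]
    exact (pr_nonneg hp _).trans (le_sup' joint (mem_univ t₀))
  set q : 𝒯 → ℝ := fun t => cpr p (fun ω => T ω = t) (fun ω => C ω = k)
  have hq : ∀ t, q t = joint t / w := fun t => rfl
  have hq1 : ∑ t, q t = 1 := by
    simp only [hq, ← sum_div, joint, sum_pr_eq_and, w, div_self hw.ne']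
  have hent : -condEntAt p T C k = ∑ t, q t * log (q t) := by simp [condEntAt, q]
  obtain ⟨t₁, -, ht₁⟩ := exists_mem_eq_sup' univ_nonempty q
  calc w * exp (-condEntAt p T C k) ≤ w * q t₁ := by
        rw [hent, ← ht₁]
        exact mul_le_mul_of_nonneg_left
          (exp_sum_mul_log_le_sup' (fun t => div_nonneg (pr_nonneg hp _) hw.le) hq1) hw.le
    _ = joint t₁ := by rw [hq, mul_div_cancel₀ _ hw.ne']
    _ ≤ univ.sup' univ_nonempty joint := le_sup' joint (mem_univ t₁)

end ConditionalEntropy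

/-- Clustering error bound: `C_e := 1 - Σ_k max_t P(T=t, C=k) ≤ 1 - exp(-H(T|C))`. -/
theorem clustering_error_le {Ω 𝒯 𝒦 : Type*} [Fintype Ω] [Fintype 𝒯] [Fintype 𝒦] [Nonempty 𝒯]
    (p : Ω → ℝ) (hp : ∀ ω, 0 ≤ p ω) (hsum : ∑ ω, p ω = 1)
    (T : Ω → 𝒯) (C : Ω → 𝒦) :
    1 - ∑ k, Finset.univ.sup' Finset.univ_nonempty
        (fun t => pr p (fun ω => T ω = t ∧ C ω = k)) ≤
      1 - Real.exp (-(condEntH p T C)) := by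
  have hbound := (exp_neg_condEntH_le hp hsum T C).trans
    (sum_le_sum fun k _ => pr_mul_exp_neg_condEntAt_le_sup' hp T C k)
  linarith
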